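/- In K = ℚ(ζ_{2^n}) with n ≥ 2, Tr_{K/ℚ}( (1/(1+ζ_{2^n})) · (1/(1+ζ_{2^n}^{-1})) ) = 2^{2n-4}. -/

import Mathlib

noncomputable section

/-- Total positivity: all complex embeddings take positive real values. -/
def totPos (K : Type*) [Field K] [NumberField K] (a : K) : Prop :=
  ∀ φ : K →+* ℂ, 0 < (φ a).re ∧ (φ a).im = 0

/-- The real value `Tr_{K/ℚ}(a·x·x̄) = ∑_φ φ(a)·|φ(x)|²` of the unary trace form at `x`. -/
def qform (K : Type*) [Field K] [NumberField K] (a x : K) : ℝ :=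
  ∑ φ : K →+* ℂ, (φ a).re * Complex.normSq (φ x)

/-- `μ(a)`: the infimum of the trace form over nonzero algebraic integers. -/
def muK (K : Type*) [Field K] [NumberField K] (a : K) : ℝ :=
  sInf { t | ∃ x : NumberField.RingOfIntegers K, x ≠ 0 ∧ t = qform K a (x : K) }

/-- `μ*(a)`: the infimum of the trace form over units. -/
def muStarK (K : Type*) [Field K] [NumberField K] (a : K) : ℝ :=
  sInf { t | ∃ u : (NumberField.RingOfIntegers K)ˣ,
    t = qform K a ((u : NumberField.RingOfIntegers K) : K) }

/-- A number field is unit reducible if `μ(a) = μ*(a)` for all totally positive `a`. -/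
def UnitReducible (K : Type*) [Field K] [NumberField K] : Prop :=
  ∀ a : K, totPos K a → muK K a = muStarK K a

/-- The reduction discrepancy `δ_K = sup_a μ*(a)/μ(a)`. -/
def deltaK (K : Type*) [Field K] [NumberField K] : ℝ :=
  sSup { t | ∃ a : K, totPos K a ∧ t = muStarK K a / muK K a }

/-!
Let `m = 2^(n-1) = [K : ℚ]`, so that `1, ζ, …, ζ^(m-1)` is a basis and `ζ^m = -1`. Since `m` is
even, `(1 + ζ) · S = 1 - ζ^m = 2` for `S = ∑_{i<m} (-ζ)^i`, and `(1 + ζ⁻¹)⁻¹ = ζ (1 + ζ)⁻¹`, so the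
element is `ζ S² / 4`. In the negacyclic basis, `Tr (ζ^k) = 0` for `0 < k < 2m`, `k ≠ m`, while
`Tr (ζ^m) = -m`; expanding `ζ S² = -∑_{i,j<m} (-ζ)^(i+j+1)` leaves exactly the `m` terms with
`i + j + 1 = m`, each of trace `m`. Hence the trace is `m² / 4 = 2^(2n-4)`.
-/

open Finset Polynomial

namespace PowerBasis

variable {R S : Type*} [CommRing R] [CommRing S] [Algebra R S] {pb : PowerBasis R S}

theorem basis_repr_gen_pow_of_ne {j : ℕ} (hj : j < pb.dim) {i : Fin pb.dim} (h : j ≠ i) :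
    pb.basis.repr (pb.gen ^ j) i = 0 := by
  rw [← Fin.val_mk hj, ← pb.basis_eq_pow, pb.basis.repr_self_apply,
    if_neg (by simpa [Fin.ext_iff] using h)]

/-- The diagonal of multiplication by `gen ^ k` vanishes: `gen ^ (k + i)` is a basis vector other
than `gen ^ i`, or `c` times one. -/
theorem trace_gen_pow_eq_zero_of_lt {c : R} (hc : pb.gen ^ pb.dim = algebraMap R S c) {k : ℕ}
    (hk₀ : 0 < k) (hk : k < pb.dim) : Algebra.trace R S (pb.gen ^ k) = 0 := by
  classical
  rw [Algebra.trace_eq_matrix_trace pb.basis, Matrix.trace]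
  refine sum_eq_zero fun i _ ↦ ?_
  rw [Matrix.diag_apply, Algebra.leftMulMatrix_eq_repr_mul, coe_basis, ← pow_add]
  rcases lt_or_ge (k + i) pb.dim with h | h
  · exact basis_repr_gen_pow_of_ne h (by omega)
  · obtain ⟨r, hr⟩ := Nat.exists_eq_add_of_le h
    rw [hr, pow_add, hc, ← Algebra.smul_def, map_smul, Finsupp.smul_apply,
      basis_repr_gen_pow_of_ne (by omega) (by omega), smul_zero]

theorem trace_gen_pow_eq_zero {c : R} (hc : pb.gen ^ pb.dim = algebraMap R S c) {k : ℕ}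
    (hk₀ : 0 < k) (hk : k < 2 * pb.dim) (hkd : k ≠ pb.dim) :
    Algebra.trace R S (pb.gen ^ k) = 0 := by
  rcases lt_or_gt_of_ne hkd with hlt | hgt
  · exact trace_gen_pow_eq_zero_of_lt hc hk₀ hlt
  · obtain ⟨r, rfl⟩ := Nat.exists_eq_add_of_le hgt.le
    rw [pow_add, hc, ← Algebra.smul_def, map_smul,
      trace_gen_pow_eq_zero_of_lt hc (by omega) (by omega), smul_zero]

theorem trace_neg_gen_pow (hd : Even pb.dim) (hgen : pb.gen ^ pb.dim = -1) {k : ℕ}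
    (hk₀ : 0 < k) (hk : k < 2 * pb.dim) :
    Algebra.trace R S ((-pb.gen) ^ k) = if k = pb.dim then -(pb.dim : R) else 0 := by
  have hc : pb.gen ^ pb.dim = algebraMap R S (-1) := by rw [hgen, map_neg, map_one]
  rw [neg_pow, show (-1 : S) ^ k = algebraMap R S ((-1) ^ k) by simp, ← Algebra.smul_def,
    map_smul, smul_eq_mul]
  split_ifs with hkd
  · subst hkd
    rw [hc, Algebra.trace_algebraMap_of_basis pb.basis, hd.neg_one_pow]
    simp
  · rw [trace_gen_pow_eq_zero hc hk₀ hk hkd, mul_zero]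

theorem trace_gen_mul_geom_sum_sq (hd : Even pb.dim) (hgen : pb.gen ^ pb.dim = -1) :
    Algebra.trace R S (pb.gen * (∑ i ∈ range pb.dim, (-pb.gen) ^ i) ^ 2) = (pb.dim : R) ^ 2 := by
  have hexpand : pb.gen * (∑ i ∈ range pb.dim, (-pb.gen) ^ i) ^ 2 =
      -∑ i ∈ range pb.dim, ∑ j ∈ range pb.dim, (-pb.gen) ^ (i + j + 1) := by
    rw [sq, sum_mul_sum, mul_sum, ← sum_neg_distrib]
    refine sum_congr rfl fun i _ ↦ ?_
    rw [mul_sum, ← sum_neg_distrib]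
    exact sum_congr rfl fun j _ ↦ by ring
  have hrow (i : ℕ) (hi : i < pb.dim) :
      ∑ j ∈ range pb.dim, Algebra.trace R S ((-pb.gen) ^ (i + j + 1)) = -(pb.dim : R) := by
    rw [sum_eq_single_of_mem (pb.dim - 1 - i) (mem_range.2 (by omega))]
    · rw [trace_neg_gen_pow hd hgen (by omega) (by omega), if_pos (by omega)]
    · intro j hj hji
      rw [mem_range] at hj
      rw [trace_neg_gen_pow hd hgen (by omega) (by omega), if_neg (by omega)]
  simp only [hexpand, map_neg, map_sum]
  rw [sum_congr rfl fun i hi ↦ hrow i (mem_range.1 hi)]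
  simp [sq]

end PowerBasis

theorem inv_one_add_eq_geom_sum {K : Type*} [Field K] [NeZero (2 : K)] {ζ : K} {m : ℕ}
    (hm : Even m) (hζ : ζ ^ m = -1) : (1 + ζ)⁻¹ = 2⁻¹ * ∑ i ∈ range m, (-ζ) ^ i := by
  have h : (1 + ζ) * ∑ i ∈ range m, (-ζ) ^ i = 2 := by
    rw [← sub_neg_eq_add, mul_neg_geom_sum, hm.neg_pow, hζ]
    ring
  refine inv_eq_of_mul_eq_one_right ?_
  rw [mul_left_comm, h, inv_mul_cancel₀ two_ne_zero]

theorem inv_one_add_mul_inv_one_add_inv {K : Type*} [Field K] {ζ : K} (hζ : ζ ≠ 0) :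
    (1 + ζ)⁻¹ * (1 + ζ⁻¹)⁻¹ = ζ * (1 + ζ)⁻¹ ^ 2 := by
  rw [show 1 + ζ⁻¹ = ζ⁻¹ * (1 + ζ) by field_simp; ring, mul_inv, inv_inv]
  ring

theorem IsCyclotomicExtension.finrank_two_pow (K : Type*) [Field K] [Algebra ℚ K] {n : ℕ}
    [IsCyclotomicExtension {2 ^ n} ℚ K] (hn : n ≠ 0) : Module.finrank ℚ K = 2 ^ (n - 1) := by
  rw [IsCyclotomicExtension.finrank K (cyclotomic.irreducible_rat (n := 2 ^ n) (by positivity)),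
    Nat.totient_prime_pow Nat.prime_two (Nat.pos_of_ne_zero hn)]
  simp

theorem IsPrimitiveRoot.pow_two_pow_pred_eq_neg_one {K : Type*} [CommRing K] [IsDomain K]
    {ζ : K} {n : ℕ} (hn : n ≠ 0) (hζ : IsPrimitiveRoot ζ (2 ^ n)) : ζ ^ 2 ^ (n - 1) = -1 := by
  refine IsPrimitiveRoot.eq_neg_one_of_two_right (hζ.pow (by positivity) ?_)
  rw [← pow_succ, Nat.sub_add_cancel (Nat.pos_of_ne_zero hn)]

/-- In `ℚ(ζ_{2^n})`, `Tr((1+ζ)⁻¹·(1+ζ⁻¹)⁻¹) = 2^{2n-4}`. -/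
theorem stmt8 (nn : ℕ) (hn : 2 ≤ nn) (K : Type) [Field K] [Algebra ℚ K]
    [IsCyclotomicExtension {((2 : ℕ+) ^ nn : ℕ)} ℚ K]
    (ζ : K) (hζ : IsPrimitiveRoot ζ (2 ^ nn)) :
    Algebra.trace ℚ K ((1 + ζ)⁻¹ * (1 + ζ⁻¹)⁻¹) = 2 ^ (2 * nn - 4) := by
  have : IsCyclotomicExtension {2 ^ nn} ℚ K := by simpa using ‹IsCyclotomicExtension _ ℚ K›
  have : CharZero K := charZero_of_injective_algebraMap (algebraMap ℚ K).injective
  set pb := hζ.powerBasis ℚ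
  have hgen : pb.gen = ζ := hζ.powerBasis_gen ℚ
  have hdim : pb.dim = 2 ^ (nn - 1) := by
    rw [← pb.finrank, IsCyclotomicExtension.finrank_two_pow K (n := nn) (by omega)]
  have hneg : pb.gen ^ pb.dim = -1 := by
    rw [hgen, hdim]
    exact hζ.pow_two_pow_pred_eq_neg_one (by omega)
  have heven : Even pb.dim := by
    rw [hdim]
    exact (Nat.even_pow' (by omega)).2 even_two
  have helt : (1 + ζ)⁻¹ * (1 + ζ⁻¹)⁻¹ =
      algebraMap ℚ K 4⁻¹ * (pb.gen * (∑ i ∈ range pb.dim, (-pb.gen) ^ i) ^ 2) := by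
    rw [inv_one_add_mul_inv_one_add_inv (hζ.ne_zero (by positivity)),
      inv_one_add_eq_geom_sum heven (hgen ▸ hneg), hgen, map_inv₀, map_ofNat]
    ring
  rw [helt, ← Algebra.smul_def, map_smul, pb.trace_gen_mul_geom_sum_sq heven hneg, hdim,
    show 2 * nn - 4 = 2 * (nn - 2) by omega, show nn - 1 = nn - 2 + 1 by omega]
  push_cast
  ring
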